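/- arXiv:1205.6649 — 9 statements merged into one kernel-verified Lean document; each statement's English description precedes it below -/
import Mathlib

section
/- Let q, h, a : ℝ → ℝ³ be smooth maps into Minkowski 3-space E₁³ forming a Frenet frame of a timelike ruled surface, satisfying q' = k₁·h, h' = -ε·k₁·q + k₂·a, a' = ε·k₂·h, where ε = ⟨q,q⟩ = ±1 and k₁ is nowhere zero. Let φ(s) = ∫ k₁ ds be a reparametrization and f(φ) = k₂(φ)/k₁(φ). Then the ruling q, viewed as a function of φ, satisfies the third-order vector ODE (d/dφ)((1/f)·q'') + ε·((1 - f²)/f)·q' - ε·(f'/f²)·q = 0 at every point where f ≠ 0. -/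
noncomputable section
open Real

/-- Vectors of Minkowski 3-space `E₁³`. -/
abbrev V3 := Fin 3 → ℝ

/-- The Lorentzian (Minkowski) inner product `⟨x,y⟩ = -x₁y₁ + x₂y₂ + x₃y₃`. -/
def mink (x y : V3) : ℝ := -(x 0 * y 0) + x 1 * y 1 + x 2 * y 2

/-- The Lorentzian cross product in `E₁³`. -/
def lcross (x y : V3) : V3 :=
  ![x 1 * y 2 - x 2 * y 1, x 0 * y 2 - x 2 * y 0, x 1 * y 0 - x 0 * y 1]

/-- Determinant of three vectors in `ℝ³`. -/
def det3 (x y z : V3) : ℝ :=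
  x 0 * (y 1 * z 2 - y 2 * z 1) - x 1 * (y 0 * z 2 - y 2 * z 0)
    + x 2 * (y 0 * z 1 - y 1 * z 0)

/-- For a timelike ruled surface Frenet frame reparametrized by
`φ = ∫ k₁ ds` (so that `dq/dφ = h`, `dh/dφ = -ε q + f a`, `da/dφ = ε f h`,
where `f = k₂/k₁`), the ruling `q` satisfies the third order vector ODE
`(d/dφ)((1/f) q'') + ε((1-f²)/f) q' - ε(f'/f²) q = 0` wherever `f ≠ 0`. -/
theorem timelike_ruling_third_order_ode
    (q h a : ℝ → V3) (k₁ k₂ f : ℝ → ℝ) (ε : ℝ)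
    (hε : ε = 1 ∨ ε = -1)
    (hk₁ : ∀ t, k₁ t ≠ 0)
    (hf : ∀ t, f t = k₂ t / k₁ t)
    (hqs : ContDiff ℝ (⊤ : ℕ∞) q) (hhs : ContDiff ℝ (⊤ : ℕ∞) h) (has : ContDiff ℝ (⊤ : ℕ∞) a)
    (hfs : ContDiff ℝ (⊤ : ℕ∞) f)
    (hF1 : ∀ t, deriv q t = h t)
    (hF2 : ∀ t, deriv h t = (-ε) • q t + f t • a t)
    (hF3 : ∀ t, deriv a t = (ε * f t) • h t) :
    ∀ t, f t ≠ 0 →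
      deriv (fun u => (1 / f u) • deriv (deriv q) u) t
        + (ε * ((1 - f t ^ 2) / f t)) • deriv q t
        - (ε * (deriv f t / f t ^ 2)) • q t = 0 := by
  intro t hft
  have hq' : deriv q = h := funext hF1
  have hdd : deriv (deriv q) = fun u => (-ε) • q u + f u • a u := by
    rw [hq']; exact funext hF2
  rw [hdd]
  have hfd : DifferentiableAt ℝ f t := hfs.differentiable (by simp) t
  have hqd : DifferentiableAt ℝ q t := hqs.differentiable (by simp) t
  have had : DifferentiableAt ℝ a t := has.differentiable (by simp) t
  have hinv : DifferentiableAt ℝ (fun u => 1 / f u) t := by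
    simpa [one_div] using hfd.fun_inv hft
  have hinner : DifferentiableAt ℝ (fun u => (-ε) • q u + f u • a u) t :=
    (hqd.fun_const_smul _).fun_add (hfd.fun_smul had)
  rw [deriv_fun_smul hinv hinner]
  have h1 : deriv (fun u => 1 / f u) t = -(deriv f t) / f t ^ 2 := by
    simp only [one_div]
    rw [deriv_fun_inv'' hfd hft]
  have h2 : deriv (fun u => (-ε) • q u + f u • a u) t
      = (-ε) • h t + (deriv f t • a t + f t • ((ε * f t) • h t)) := by
    rw [deriv_fun_add (hqd.fun_const_smul _) (hfd.fun_smul had), deriv_fun_const_smul _ hqd,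
      deriv_fun_smul hfd had, hF1, hF3]
    abel
  rw [h1, h2, hF1 t]
  match_scalars <;> field_simp <;> ring
end
end

section
/- Let q, h, a : ℝ → ℝ³ be smooth maps into Minkowski 3-space forming a Frenet frame of a spacelike ruled surface, satisfying q' = k₁·h, h' = k₁·q + k₂·a, a' = k₂·h, with k₁ nowhere zero. Let φ(s) = ∫ k₁ ds and f(φ) = k₂(φ)/k₁(φ). Then the ruling q as a function of φ satisfies (d/dφ)((1/f)·q'') - ((1 + f²)/f)·q' + (f'/f²)·q = 0 wherever f ≠ 0. -/
noncomputable section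
open Real

/-- For a spacelike ruled surface Frenet frame reparametrized by
`φ = ∫ k₁ ds` (so that `dq/dφ = h`, `dh/dφ = q + f a`, `da/dφ = f h`,
where `f = k₂/k₁`), the ruling `q` satisfies the third order vector ODE
`(d/dφ)((1/f) q'') - ((1+f²)/f) q' + (f'/f²) q = 0` wherever `f ≠ 0`. -/
theorem spacelike_ruling_third_order_ode
    (q h a : ℝ → V3) (k₁ k₂ f : ℝ → ℝ)
    (hk₁ : ∀ t, k₁ t ≠ 0)
    (hf : ∀ t, f t = k₂ t / k₁ t)
    (hqs : ContDiff ℝ (⊤ : ℕ∞) q) (hhs : ContDiff ℝ (⊤ : ℕ∞) h) (has : ContDiff ℝ (⊤ : ℕ∞) a)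
    (hfs : ContDiff ℝ (⊤ : ℕ∞) f)
    (hF1 : ∀ t, deriv q t = h t)
    (hF2 : ∀ t, deriv h t = q t + f t • a t)
    (hF3 : ∀ t, deriv a t = f t • h t) :
    ∀ t, f t ≠ 0 →
      deriv (fun u => (1 / f u) • deriv (deriv q) u) t
        - ((1 + f t ^ 2) / f t) • deriv q t
        + (deriv f t / f t ^ 2) • q t = 0 := by
  intro t hft
  have hqd : ∀ u, HasDerivAt q (h u) u := fun u => by
    have := (hqs.differentiable (by simp) u).hasDerivAt
    rwa [hF1 u] at this
  have hhd : ∀ u, HasDerivAt h (q u + f u • a u) u := fun u => by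
    have := (hhs.differentiable (by simp) u).hasDerivAt
    rwa [hF2 u] at this
  have had : ∀ u, HasDerivAt a (f u • h u) u := fun u => by
    have := (has.differentiable (by simp) u).hasDerivAt
    rwa [hF3 u] at this
  have hfd : HasDerivAt f (deriv f t) t := (hfs.differentiable (by simp) t).hasDerivAt
  have hinv : HasDerivAt (fun u => (f u)⁻¹) (-(deriv f t) / (f t) ^ 2) t :=
    hfd.inv hft
  -- derivative of g = (f)⁻¹ • q + a
  have hg : HasDerivAt (fun u => (f u)⁻¹ • q u + a u)
      ((f t)⁻¹ • h t + (-(deriv f t) / (f t) ^ 2) • q t + f t • h t) t :=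
    (hinv.smul (hqd t)).add (had t)
  -- the original function agrees with g near t
  have hev : ∀ᶠ u in nhds t, f u ≠ 0 :=
    (hfs.continuous.continuousAt).eventually_ne hft
  have heq : (fun u => (1 / f u) • deriv (deriv q) u) =ᶠ[nhds t]
      (fun u => (f u)⁻¹ • q u + a u) := by
    filter_upwards [hev] with u hu
    have hdd : deriv (deriv q) u = q u + f u • a u := by
      have : deriv q = h := funext hF1
      rw [this, hF2]
    rw [hdd, one_div, smul_add, smul_smul, inv_mul_cancel₀ hu, one_smul]
  have hmain : HasDerivAt (fun u => (1 / f u) • deriv (deriv q) u)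
      ((f t)⁻¹ • h t + (-(deriv f t) / (f t) ^ 2) • q t + f t • h t) t :=
    hg.congr_of_eventuallyEq heq
  rw [hmain.deriv, hF1 t]
  match_scalars <;> field_simp <;> ring
end
end

section
/- Let N be a timelike ruled surface with unit-speed striction curve c having tangent T = cosh(θ)·q + sinh(θ)·a and Frenet frame {q,h,a} with k₁ ≠ 0. Then N is developable if and only if T(s) = q(s) for all s. -/
/-!
The numerator `det(c', q, q') = k₁ sinh θ · det(a, q, h)` only sees the `a`-component of the
tangent, and `det(a, q, h) = -⟨h, a × q⟩ = ⟨h, h⟩ = 1`, while `⟨q', q'⟩ = k₁²`. So the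
distribution parameter is `sinh θ / k₁`, which vanishes exactly when `θ = 0`. Conversely, `c' = q`
kills the numerator `det(q, q, q')`.
-/

noncomputable section
open Real

/-- The distribution parameter `det(c', q, q') / ⟨q', q'⟩`, taking the values of `c'`, `q`, `q'`
at one point. -/
def distParam (dc q dq : V3) : ℝ := det3 dc q dq / mink dq dq

lemma mink_smul_smul (r t : ℝ) (x y : V3) : mink (r • x) (t • y) = r * t * mink x y := by
  simp only [mink, Pi.smul_apply, smul_eq_mul]
  ring

lemma det3_eq_neg_mink_lcross (x y z : V3) : det3 x y z = -mink z (lcross x y) := by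
  simp only [det3, mink, lcross, Matrix.cons_val_zero, Matrix.cons_val_one, Matrix.cons_val_two,
    Matrix.head_cons, Matrix.tail_cons]
  ring

lemma det3_self_left (x z : V3) : det3 x x z = 0 := by
  simp only [det3]
  ring

lemma det3_smul_add_smul_self_left (α β k : ℝ) (x y z : V3) :
    det3 (α • x + β • y) x (k • z) = k * β * det3 y x z := by
  simp only [det3, Pi.add_apply, Pi.smul_apply, smul_eq_mul]
  ring

lemma distParam_self_left (q dq : V3) : distParam q q dq = 0 := by
  rw [distParam, det3_self_left, zero_div]

lemma distParam_eq_sinh_div {θ k : ℝ} {dc q h a : V3} (hk : k ≠ 0)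
    (hT : dc = cosh θ • q + sinh θ • a) (hhh : mink h h = 1) (haq : lcross a q = -h) :
    distParam dc q (k • h) = sinh θ / k := by
  have hdet : det3 a q h = 1 := by
    rw [det3_eq_neg_mink_lcross, haq]
    simp only [mink, Pi.neg_apply] at hhh ⊢
    linarith
  rw [distParam, hT, det3_smul_add_smul_self_left, hdet, mink_smul_smul, hhh]
  field_simp

lemma distParam_eq_zero_iff {θ k : ℝ} {dc q h a : V3} (hk : k ≠ 0)
    (hT : dc = cosh θ • q + sinh θ • a) (hhh : mink h h = 1) (haq : lcross a q = -h) :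
    distParam dc q (k • h) = 0 ↔ dc = q := by
  refine ⟨fun hδ ↦ ?_, fun hdc ↦ hdc ▸ distParam_self_left q _⟩
  rw [distParam_eq_sinh_div hk hT hhh haq, div_eq_zero_iff, or_iff_left hk, sinh_eq_zero] at hδ
  rw [hT, hδ, cosh_zero, sinh_zero, one_smul, zero_smul, add_zero]

theorem timelike_developable_iff_tangent_eq_ruling_general
    (c q h a : ℝ → V3) (θ k₁ : ℝ → ℝ)
    (hk₁ : ∀ s, k₁ s ≠ 0)
    (hT : ∀ s, deriv c s = Real.cosh (θ s) • q s + Real.sinh (θ s) • a s)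
    (hq' : ∀ s, deriv q s = k₁ s • h s)
    (hhh : ∀ s, mink (h s) (h s) = 1)
    (hc3 : ∀ s, lcross (a s) (q s) = -(h s)) :
    (∀ s, det3 (deriv c s) (q s) (deriv q s) / mink (deriv q s) (deriv q s) = 0)
      ↔ ∀ s, deriv c s = q s :=
  forall_congr' fun s ↦ by
    simpa only [distParam, hq' s] using distParam_eq_zero_iff (hk₁ s) (hT s) (hhh s) (hc3 s)

/-- A timelike ruled surface with unit-speed striction curve `c`
(tangent `T = cosh θ • q + sinh θ • a`) and Frenet frame `{q,h,a}` with `k₁ ≠ 0`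
is developable (its distribution parameter vanishes identically) if and only if
`T(s) = q(s)` for all `s`. -/
theorem timelike_developable_iff_tangent_eq_ruling
    (c q h a : ℝ → V3) (θ k₁ : ℝ → ℝ) (ε : ℝ)
    (hε : ε = 1 ∨ ε = -1)
    (hk₁ : ∀ s, k₁ s ≠ 0)
    (hT : ∀ s, deriv c s = Real.cosh (θ s) • q s + Real.sinh (θ s) • a s)
    (hq' : ∀ s, deriv q s = k₁ s • h s)
    (hqq : ∀ s, mink (q s) (q s) = ε)
    (hhh : ∀ s, mink (h s) (h s) = 1)
    (haa : ∀ s, mink (a s) (a s) = -ε)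
    (hc1 : ∀ s, lcross (q s) (h s) = ε • a s)
    (hc2 : ∀ s, lcross (h s) (a s) = (-ε) • q s)
    (hc3 : ∀ s, lcross (a s) (q s) = -(h s)) :
    (∀ s, det3 (deriv c s) (q s) (deriv q s) / mink (deriv q s) (deriv q s) = 0)
      ↔ ∀ s, deriv c s = q s :=
  timelike_developable_iff_tangent_eq_ruling_general c q h a θ k₁ hk₁ hT hq' hhh hc3
end
end

section
/- Let N_α and N_β be timelike ruled surfaces with Frenet frames and curvatures as above (k₁ nowhere zero on both). If there is a smooth transformation s_α(s_β) with ds_α/ds_β = k₁^β/k₁^α such that h_α(s_α(s_β)) = h_β(s_β) for all s_β, and q_α, q_β agree at one corresponding pair of parameters, then q_α(s_α(s_β)) = q_β(s_β) for all s_β; i.e., N_α and N_β are similar ruled surfaces. -/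
noncomputable section
open Real

/-- If the central normals of two timelike ruled surfaces coincide
under the transformation with `σ' = k₁^β / k₁^α ∘ σ`, and the rulings agree at
one corresponding pair of parameters, then the rulings agree everywhere, i.e.
the surfaces are similar ruled surfaces. -/
theorem central_normals_eq_implies_similar
    (qα hα aα qβ hβ aβ : ℝ → V3) (k1α k2α k1β k2β : ℝ → ℝ)
    (εα εβ : ℝ) (σ : ℝ → ℝ) (t₀ : ℝ)
    (hεα : εα = 1 ∨ εα = -1) (hεβ : εβ = 1 ∨ εβ = -1)
    (hσs : ContDiff ℝ (⊤ : ℕ∞) σ)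
    (hk1α : ∀ s, k1α s ≠ 0) (hk1β : ∀ s, k1β s ≠ 0)
    (hqαs : ContDiff ℝ (⊤ : ℕ∞) qα) (hqβs : ContDiff ℝ (⊤ : ℕ∞) qβ)
    (hFα1 : ∀ s, deriv qα s = k1α s • hα s)
    (hFα2 : ∀ s, deriv hα s = (-(εα * k1α s)) • qα s + k2α s • aα s)
    (hFα3 : ∀ s, deriv aα s = (εα * k2α s) • hα s)
    (hFβ1 : ∀ s, deriv qβ s = k1β s • hβ s)
    (hFβ2 : ∀ s, deriv hβ s = (-(εβ * k1β s)) • qβ s + k2β s • aβ s)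
    (hFβ3 : ∀ s, deriv aβ s = (εβ * k2β s) • hβ s)
    (hlam : ∀ t, deriv σ t = k1β t / k1α (σ t))
    (hh : ∀ t, hα (σ t) = hβ t)
    (hinit : qα (σ t₀) = qβ t₀) :
    ∀ t, qα (σ t) = qβ t := by
  have hσd : Differentiable ℝ σ := hσs.differentiable (by simp)
  have hqαd : Differentiable ℝ qα := hqαs.differentiable (by simp)
  have hqβd : Differentiable ℝ qβ := hqβs.differentiable (by simp)
  have key : ∀ t, HasDerivAt (fun t => qα (σ t) - qβ t) 0 t := by
    intro t
    have h1 : HasDerivAt qα (deriv qα (σ t)) (σ t) := (hqαd (σ t)).hasDerivAt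
    have h2 : HasDerivAt σ (deriv σ t) t := (hσd t).hasDerivAt
    have hcomp : HasDerivAt (fun t => qα (σ t)) (deriv σ t • deriv qα (σ t)) t :=
      h1.scomp t h2
    have h3 : HasDerivAt qβ (deriv qβ t) t := (hqβd t).hasDerivAt
    have heq : deriv σ t • deriv qα (σ t) = deriv qβ t := by
      rw [hlam, hFα1, hFβ1, hh, smul_smul, div_mul_cancel₀ _ (hk1α (σ t))]
    have := hcomp.sub h3
    rwa [heq, sub_self] at this
  intro t
  have hdiff : Differentiable ℝ (fun t => qα (σ t) - qβ t) :=
    fun t => (key t).differentiableAt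
  have hconst := is_const_of_deriv_eq_zero hdiff (fun t => (key t).deriv) t t₀
  have : qα (σ t) - qβ t = qα (σ t₀) - qβ t₀ := hconst
  rw [hinit, sub_self, sub_eq_zero] at this
  exact this
end
end

section
/- Let N_α, N_β be timelike ruled surfaces with Frenet frames {q_α,h_α,a_α}, {q_β,h_β,a_β} and k₂^α, k₂^β nowhere zero. If under a smooth transformation s_α(s_β) with ds_α/ds_β = k₂^β/k₂^α the central tangents satisfy a_α(s_α(s_β)) = ε_α·ε_β·a_β(s_β) for all s_β, then h_α(s_α(s_β)) = h_β(s_β) and q_α(s_α(s_β)) = q_β(s_β), i.e., N_α and N_β are timelike similar ruled surfaces. -/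
noncomputable section
open Real

/-- If under the transformation with `σ' = k₂^β / k₂^α ∘ σ` the
central tangents of two timelike ruled surfaces satisfy
`a_α = ε_α ε_β • a_β` at corresponding parameters, then the central normals and
the rulings coincide, i.e. the surfaces are timelike similar ruled surfaces. -/
theorem central_tangents_relation_implies_similar
    (qα hα aα qβ hβ aβ : ℝ → V3) (k1α k2α k1β k2β : ℝ → ℝ)
    (εα εβ : ℝ) (σ : ℝ → ℝ)
    (hεα : εα = 1 ∨ εα = -1) (hεβ : εβ = 1 ∨ εβ = -1)
    (hσs : ContDiff ℝ (⊤ : ℕ∞) σ)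
    (hk2α : ∀ s, k2α s ≠ 0) (hk2β : ∀ s, k2β s ≠ 0)
    (haαs : ContDiff ℝ (⊤ : ℕ∞) aα) (haβs : ContDiff ℝ (⊤ : ℕ∞) aβ)
    (hFα1 : ∀ s, deriv qα s = k1α s • hα s)
    (hFα2 : ∀ s, deriv hα s = (-(εα * k1α s)) • qα s + k2α s • aα s)
    (hFα3 : ∀ s, deriv aα s = (εα * k2α s) • hα s)
    (hFβ1 : ∀ s, deriv qβ s = k1β s • hβ s)
    (hFβ2 : ∀ s, deriv hβ s = (-(εβ * k1β s)) • qβ s + k2β s • aβ s)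
    (hFβ3 : ∀ s, deriv aβ s = (εβ * k2β s) • hβ s)
    (hcα : ∀ s, lcross (hα s) (aα s) = (-εα) • qα s)
    (hcβ : ∀ s, lcross (hβ s) (aβ s) = (-εβ) • qβ s)
    (hlam : ∀ t, deriv σ t = k2β t / k2α (σ t))
    (ha : ∀ t, aα (σ t) = (εα * εβ) • aβ t) :
    ∀ t, hα (σ t) = hβ t ∧ qα (σ t) = qβ t := by

  have hεβ2 : εβ * εβ = 1 := by rcases hεβ with h | h <;> rw [h] <;> norm_num
  have hεα2 : εα * εα = 1 := by rcases hεα with h | h <;> rw [h] <;> norm_num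
  have hεα0 : εα ≠ 0 := by rcases hεα with h | h <;> rw [h] <;> norm_num
  intro t
  have hdc : HasDerivAt (fun t => aα (σ t)) (deriv σ t • deriv aα (σ t)) t := by
    exact HasDerivAt.scomp t ((haαs.differentiable (by simp) (σ t)).hasDerivAt)
      ((hσs.differentiable (by simp) t).hasDerivAt)
  have hdr : HasDerivAt (fun t => (εα * εβ) • aβ t) ((εα * εβ) • deriv aβ t) t :=
    ((haβs.differentiable (by simp) t).hasDerivAt).const_smul (εα * εβ)
  have heq : (fun t => aα (σ t)) = fun t => (εα * εβ) • aβ t := funext ha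
  have hderiv : deriv σ t • deriv aα (σ t) = (εα * εβ) • deriv aβ t := by
    have := hdc.deriv
    rw [heq] at this
    rw [← this, hdr.deriv]
  rw [hFα3, hFβ3, hlam, smul_smul, smul_smul] at hderiv
  have hs1 : k2β t / k2α (σ t) * (εα * k2α (σ t)) = εα * k2β t := by
    field_simp [hk2α (σ t)]
  have hs2 : εα * εβ * (εβ * k2β t) = εα * k2β t := by
    rw [show εα * εβ * (εβ * k2β t) = εα * (εβ * εβ) * k2β t by ring, hεβ2]; ring
  rw [hs1, hs2] at hderiv
  have hne : εα * k2β t ≠ 0 := mul_ne_zero hεα0 (hk2β t)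
  have hh : hα (σ t) = hβ t := smul_right_injective V3 hne hderiv
  refine ⟨hh, ?_⟩
  have hlc : ∀ (c : ℝ) (x y : V3), lcross x (c • y) = c • lcross x y := by
    intro c x y
    funext i
    fin_cases i <;> simp [lcross, smul_eq_mul] <;> ring
  have h1 := hcα (σ t)
  rw [ha t, hh, hlc, hcβ t, smul_smul] at h1
  have h2 : (-εα) • qα (σ t) = (-εα) • qβ t := by
    rw [← h1]
    congr 1
    rw [show εα * εβ * -εβ = -(εα * (εβ * εβ)) by ring, hεβ2, mul_one]
  exact smul_right_injective V3 (neg_ne_zero.mpr hεα0) h2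
end
end

section
/- Let N_α, N_β be timelike ruled surfaces with curvatures k₁^α, k₂^α and k₁^β, k₂^β, with k₁ nowhere zero on both, and the same sign ε of ⟨q,q⟩. Suppose that under the total-curvature parametrizations φ_α(s_α) = ∫k₁^α ds_α and φ_β(s_β) = ∫k₁^β ds_β, the ratios agree: k₂^β/k₁^β at φ equals k₂^α/k₁^α at the same φ, and the initial Frenet frames agree at a corresponding pair of points. Then q_α = q_β at corresponding parameters (φ_α = φ_β); i.e., N_α and N_β are timelike similar ruled surfaces under the transformation keeping equal total curvatures. -/
noncomputable section
open Real

/-- Two timelike ruled surfaces, reparametrized by their total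
curvatures `φ = ∫ k₁ ds` (so the frames satisfy `dq/dφ = h`,
`dh/dφ = -ε q + f a`, `da/dφ = ε f h` with `f = k₂/k₁`), whose curvature ratios
agree and whose Frenet frames agree at one corresponding point, have equal
rulings at all corresponding parameters: they are similar ruled surfaces. -/
theorem equal_curvature_ratios_implies_similar_timelike
    (qα hα aα qβ hβ aβ : ℝ → V3) (fα fβ : ℝ → ℝ) (ε : ℝ) (t₀ : ℝ)
    (hε : ε = 1 ∨ ε = -1)
    (hqαs : ContDiff ℝ (⊤ : ℕ∞) qα) (hhαs : ContDiff ℝ (⊤ : ℕ∞) hα) (haαs : ContDiff ℝ (⊤ : ℕ∞) aα)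
    (hqβs : ContDiff ℝ (⊤ : ℕ∞) qβ) (hhβs : ContDiff ℝ (⊤ : ℕ∞) hβ) (haβs : ContDiff ℝ (⊤ : ℕ∞) aβ)
    (hfαs : Continuous fα) (hfβs : Continuous fβ)
    (hFα1 : ∀ t, deriv qα t = hα t)
    (hFα2 : ∀ t, deriv hα t = (-ε) • qα t + fα t • aα t)
    (hFα3 : ∀ t, deriv aα t = (ε * fα t) • hα t)
    (hFβ1 : ∀ t, deriv qβ t = hβ t)
    (hFβ2 : ∀ t, deriv hβ t = (-ε) • qβ t + fβ t • aβ t)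
    (hFβ3 : ∀ t, deriv aβ t = (ε * fβ t) • hβ t)
    (hratio : ∀ t, fα t = fβ t)
    (hinit : qα t₀ = qβ t₀ ∧ hα t₀ = hβ t₀ ∧ aα t₀ = aβ t₀) :
    ∀ t, qα t = qβ t := by
  obtain ⟨hq0, hh0, ha0⟩ := hinit
  have hεabs : |ε| = 1 := by rcases hε with h | h <;> simp [h]
  intro t
  -- work on the interval [a, b]
  set a : ℝ := min t₀ t - 1 with ha_def
  set b : ℝ := max t₀ t + 1 with hb_def
  have hab : a ≤ b := by
    have h1 : min t₀ t ≤ max t₀ t := le_trans (min_le_left _ _) (le_max_left _ _)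
    simp only [ha_def, hb_def]; linarith
  have ht₀mem : t₀ ∈ Set.Ioo a b := by
    constructor
    · have := min_le_left t₀ t; simp only [ha_def]; linarith
    · have := le_max_left t₀ t; simp only [hb_def]; linarith
  have htmem : t ∈ Set.Icc a b := by
    constructor
    · have := min_le_right t₀ t; simp only [ha_def]; linarith
    · have := le_max_right t₀ t; simp only [hb_def]; linarith
  -- bound for fα on the interval; clamp time
  obtain ⟨C₀, hC₀⟩ := (isCompact_Icc (a := a) (b := b)).exists_bound_of_continuousOn
    hfαs.continuousOn
  set C : ℝ := max C₀ 0 with hC_def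
  have hC0 : 0 ≤ C := le_max_right _ _
  set g : ℝ → ℝ := fun u => fα (Set.projIcc a b hab u) with hg_def
  have hgC : ∀ u, |g u| ≤ C := fun u =>
    le_trans (hC₀ _ (Set.projIcc a b hab u).2) (le_max_left _ _)
  have hgeq : ∀ u ∈ Set.Icc a b, g u = fα u := by
    intro u hu; simp [hg_def, Set.projIcc_of_mem hab hu]
  -- the vector field
  set v : ℝ → (V3 × V3 × V3) → (V3 × V3 × V3) := fun u p =>
    (p.2.1, (-ε) • p.1 + g u • p.2.2, (ε * g u) • p.2.1) with hv_def
  set K : NNReal := (1 + C).toNNReal with hK_def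
  have hKcoe : (K : ℝ) = 1 + C := Real.coe_toNNReal _ (by linarith)
  have hv : ∀ u, LipschitzWith K (v u) := by
    intro u
    apply LipschitzWith.of_dist_le_mul
    intro p p'
    rw [hKcoe]
    have hd1 : dist p.1 p'.1 ≤ dist p p' := le_max_left _ _
    have hd2 : dist p.2 p'.2 ≤ dist p p' := le_max_right _ _
    have hd21 : dist p.2.1 p'.2.1 ≤ dist p p' := le_trans (le_max_left _ _) hd2
    have hd22 : dist p.2.2 p'.2.2 ≤ dist p p' := le_trans (le_max_right _ _) hd2
    have hdnn : 0 ≤ dist p p' := dist_nonneg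
    have hgu := hgC u
    have h1 : dist (v u p).1 (v u p').1 ≤ (1 + C) * dist p p' := by
      simp only [hv_def]
      nlinarith
    have h2 : dist (v u p).2.1 (v u p').2.1 ≤ (1 + C) * dist p p' := by
      simp only [hv_def]
      calc dist ((-ε) • p.1 + g u • p.2.2) ((-ε) • p'.1 + g u • p'.2.2)
          ≤ dist ((-ε) • p.1) ((-ε) • p'.1) + dist (g u • p.2.2) (g u • p'.2.2) :=
            dist_add_add_le _ _ _ _
        _ = |(-ε)| * dist p.1 p'.1 + |g u| * dist p.2.2 p'.2.2 := by
            rw [dist_smul₀, dist_smul₀, Real.norm_eq_abs, Real.norm_eq_abs]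
        _ ≤ 1 * dist p p' + C * dist p p' := by
            have : |(-ε)| = 1 := by rw [abs_neg, hεabs]
            rw [this]
            have habs : 0 ≤ |g u| := abs_nonneg _
            nlinarith
        _ ≤ (1 + C) * dist p p' := by nlinarith
    have h3 : dist (v u p).2.2 (v u p').2.2 ≤ (1 + C) * dist p p' := by
      simp only [hv_def]
      rw [dist_smul₀, Real.norm_eq_abs, abs_mul, hεabs, one_mul]
      nlinarith [abs_nonneg (g u)]
    calc dist (v u p) (v u p') = max (dist (v u p).1 (v u p').1)
          (max (dist (v u p).2.1 (v u p').2.1) (dist (v u p).2.2 (v u p').2.2)) := by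
          rw [Prod.dist_eq, Prod.dist_eq]
      _ ≤ (1 + C) * dist p p' := by
          apply max_le h1 (max_le h2 h3)
  -- the two solutions
  set Fα : ℝ → V3 × V3 × V3 := fun u => (qα u, hα u, aα u) with hFα_def
  set Fβ : ℝ → V3 × V3 × V3 := fun u => (qβ u, hβ u, aβ u) with hFβ_def
  have hFα' : ∀ u ∈ Set.Ioo a b, HasDerivAt Fα (v u (Fα u)) u := by
    intro u hu
    have h1 : HasDerivAt qα (hα u) u := by
      have := (hqαs.differentiable (by simp) u).hasDerivAt
      rwa [hFα1 u] at this
    have h2 : HasDerivAt hα ((-ε) • qα u + fα u • aα u) u := by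
      have := (hhαs.differentiable (by simp) u).hasDerivAt
      rwa [hFα2 u] at this
    have h3 : HasDerivAt aα ((ε * fα u) • hα u) u := by
      have := (haαs.differentiable (by simp) u).hasDerivAt
      rwa [hFα3 u] at this
    have hgu : g u = fα u := hgeq u (Set.Ioo_subset_Icc_self hu)
    have : v u (Fα u) = (hα u, (-ε) • qα u + fα u • aα u, (ε * fα u) • hα u) := by
      simp [hv_def, hFα_def, hgu]
    rw [this]
    exact (h1.prodMk (h2.prodMk h3))
  have hFβ' : ∀ u ∈ Set.Ioo a b, HasDerivAt Fβ (v u (Fβ u)) u := by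
    intro u hu
    have h1 : HasDerivAt qβ (hβ u) u := by
      have := (hqβs.differentiable (by simp) u).hasDerivAt
      rwa [hFβ1 u] at this
    have h2 : HasDerivAt hβ ((-ε) • qβ u + fβ u • aβ u) u := by
      have := (hhβs.differentiable (by simp) u).hasDerivAt
      rwa [hFβ2 u] at this
    have h3 : HasDerivAt aβ ((ε * fβ u) • hβ u) u := by
      have := (haβs.differentiable (by simp) u).hasDerivAt
      rwa [hFβ3 u] at this
    have hgu : g u = fβ u := by rw [hgeq u (Set.Ioo_subset_Icc_self hu), hratio u]
    have : v u (Fβ u) = (hβ u, (-ε) • qβ u + fβ u • aβ u, (ε * fβ u) • hβ u) := by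
      simp [hv_def, hFβ_def, hgu]
    rw [this]
    exact (h1.prodMk (h2.prodMk h3))
  have hcontα : ContinuousOn Fα (Set.Icc a b) :=
    ((hqαs.continuous.prodMk (hhαs.continuous.prodMk haαs.continuous))).continuousOn
  have hcontβ : ContinuousOn Fβ (Set.Icc a b) :=
    ((hqβs.continuous.prodMk (hhβs.continuous.prodMk haβs.continuous))).continuousOn
  have heq0 : Fα t₀ = Fβ t₀ := by simp [hFα_def, hFβ_def, hq0, hh0, ha0]
  have key : Set.EqOn Fα Fβ (Set.Icc a b) :=
    ODE_solution_unique_of_mem_Icc (s := fun _ => Set.univ)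
      (fun u _ => (hv u).lipschitzOnWith) ht₀mem hcontα hFα'
      (fun _ _ => Set.mem_univ _) hcontβ hFβ' (fun _ _ => Set.mem_univ _) heq0
  have := key htmem
  exact congrArg Prod.fst this
end
end

section
/- Let N_α, N_β be spacelike ruled surfaces (timelike central normal) with curvatures k₁^α, k₂^α, k₁^β, k₂^β, k₁ nowhere zero on both. If under the parametrizations φ_α = ∫k₁^α ds_α and φ_β = ∫k₁^β ds_β the ratios k₂/k₁ agree as functions of φ, and the Frenet frames agree at one corresponding point, then q_α = q_β at all corresponding parameters, so N_α and N_β are spacelike similar ruled surfaces. -/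
noncomputable section
open Real

/-- Two spacelike ruled surfaces, reparametrized by their total
curvatures `φ = ∫ k₁ ds` (so the frames satisfy `dq/dφ = h`, `dh/dφ = q + f a`,
`da/dφ = f h` with `f = k₂/k₁`), whose curvature ratios agree and whose Frenet
frames agree at one corresponding point, have equal rulings at all
corresponding parameters: they are spacelike similar ruled surfaces. -/
theorem equal_curvature_ratios_implies_similar_spacelike
    (qα hα aα qβ hβ aβ : ℝ → V3) (fα fβ : ℝ → ℝ) (t₀ : ℝ)
    (hqαs : ContDiff ℝ (⊤ : ℕ∞) qα) (hhαs : ContDiff ℝ (⊤ : ℕ∞) hα) (haαs : ContDiff ℝ (⊤ : ℕ∞) aα)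
    (hqβs : ContDiff ℝ (⊤ : ℕ∞) qβ) (hhβs : ContDiff ℝ (⊤ : ℕ∞) hβ) (haβs : ContDiff ℝ (⊤ : ℕ∞) aβ)
    (hfαs : Continuous fα) (hfβs : Continuous fβ)
    (hFα1 : ∀ t, deriv qα t = hα t)
    (hFα2 : ∀ t, deriv hα t = qα t + fα t • aα t)
    (hFα3 : ∀ t, deriv aα t = fα t • hα t)
    (hFβ1 : ∀ t, deriv qβ t = hβ t)
    (hFβ2 : ∀ t, deriv hβ t = qβ t + fβ t • aβ t)
    (hFβ3 : ∀ t, deriv aβ t = fβ t • hβ t)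
    (hratio : ∀ t, fα t = fβ t)
    (hinit : qα t₀ = qβ t₀ ∧ hα t₀ = hβ t₀ ∧ aα t₀ = aβ t₀) :
    ∀ t, qα t = qβ t := by
  obtain ⟨h1, h2, h3⟩ := hinit
  intro t
  set a : ℝ := min t t₀ - 1 with ha_def
  set b : ℝ := max t t₀ + 1 with hb_def
  have hta : t ∈ Set.Ioo a b :=
    ⟨by have := min_le_left t t₀; simp only [ha_def]; linarith,
     by have := le_max_left t t₀; simp only [hb_def]; linarith⟩
  have ht0 : t₀ ∈ Set.Ioo a b :=
    ⟨by have := min_le_right t t₀; simp only [ha_def]; linarith,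
     by have := le_max_right t t₀; simp only [hb_def]; linarith⟩
  have hab : a ≤ b := le_of_lt (lt_trans hta.1 hta.2)
  -- clamped coefficient
  set c : ℝ → ℝ := fun s => fα (min (max s a) b) with hc_def
  have hclamp : ∀ s : ℝ, min (max s a) b ∈ Set.Icc a b := fun s =>
    ⟨le_min (le_max_right s a) hab, min_le_right _ _⟩
  have hceq : ∀ s ∈ Set.Icc a b, c s = fα s := by
    intro s hs
    simp only [hc_def]
    rw [max_eq_left hs.1, min_eq_left hs.2]
  -- bound on fα over Icc a b
  obtain ⟨M, hM⟩ := (isCompact_Icc (a := a) (b := b)).exists_bound_of_continuousOn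
    (hfαs.continuousOn)
  have hM0 : 0 ≤ M := le_trans (norm_nonneg _) (hM t (Set.mem_Icc_of_Ioo hta))
  have hcM : ∀ s : ℝ, ‖c s‖ ≤ M := fun s => hM _ (hclamp s)
  set K : NNReal := (M + 1).toNNReal with hK_def
  have hKval : (K : ℝ) = M + 1 := Real.coe_toNNReal _ (by linarith)
  -- the ODE vector field
  set v : ℝ → (V3 × V3 × V3) → (V3 × V3 × V3) :=
    fun s y => (y.2.1, y.1 + c s • y.2.2, c s • y.2.1) with hv_def
  have hv : ∀ s, LipschitzWith K (v s) := by
    intro s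
    apply LipschitzWith.of_dist_le_mul
    intro y z
    have hD0 : (0:ℝ) ≤ dist y z := dist_nonneg
    have e0 : dist y.2 z.2 ≤ dist y z := by rw [Prod.dist_eq]; exact le_max_right _ _
    have e1 : dist y.1 z.1 ≤ dist y z := by rw [Prod.dist_eq]; exact le_max_left _ _
    have e2 : dist y.2.1 z.2.1 ≤ dist y z :=
      le_trans (by rw [Prod.dist_eq (x := y.2)]; exact le_max_left _ _) e0
    have e3 : dist y.2.2 z.2.2 ≤ dist y z :=
      le_trans (by rw [Prod.dist_eq (x := y.2)]; exact le_max_right _ _) e0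
    have hcs := hcM s
    have hcs0 : 0 ≤ ‖c s‖ := norm_nonneg _
    rw [hKval, Prod.dist_eq, Prod.dist_eq]
    apply max_le
    · nlinarith
    apply max_le
    · calc dist (y.1 + c s • y.2.2) (z.1 + c s • z.2.2)
          ≤ dist y.1 z.1 + dist (c s • y.2.2) (c s • z.2.2) := dist_add_add_le _ _ _ _
        _ = dist y.1 z.1 + ‖c s‖ * dist y.2.2 z.2.2 := by rw [dist_smul₀]
        _ ≤ (M + 1) * dist y z := by nlinarith
    · calc dist (c s • y.2.1) (c s • z.2.1) = ‖c s‖ * dist y.2.1 z.2.1 := dist_smul₀ _ _ _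
        _ ≤ (M + 1) * dist y z := by nlinarith
  set F : ℝ → V3 × V3 × V3 := fun s => (qα s, hα s, aα s) with hF_def
  set G : ℝ → V3 × V3 × V3 := fun s => (qβ s, hβ s, aβ s) with hG_def
  have hF : ∀ s ∈ Set.Ioo a b, HasDerivAt F (v s (F s)) s ∧ F s ∈ Set.univ := by
    intro s hs
    refine ⟨?_, trivial⟩
    have dq : HasDerivAt qα (hα s) s := by
      have := (hqαs.differentiable (by simp) s).hasDerivAt; rwa [hFα1] at this
    have dh : HasDerivAt hα (qα s + fα s • aα s) s := by
      have := (hhαs.differentiable (by simp) s).hasDerivAt; rwa [hFα2] at this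
    have da : HasDerivAt aα (fα s • hα s) s := by
      have := (haαs.differentiable (by simp) s).hasDerivAt; rwa [hFα3] at this
    have : v s (F s) = (hα s, qα s + fα s • aα s, fα s • hα s) := by
      simp only [hv_def, hF_def, hceq s (Set.mem_Icc_of_Ioo hs)]
    rw [this]
    exact dq.prodMk (dh.prodMk da)
  have hG : ∀ s ∈ Set.Ioo a b, HasDerivAt G (v s (G s)) s ∧ G s ∈ Set.univ := by
    intro s hs
    refine ⟨?_, trivial⟩
    have dq : HasDerivAt qβ (hβ s) s := by
      have := (hqβs.differentiable (by simp) s).hasDerivAt; rwa [hFβ1] at this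
    have dh : HasDerivAt hβ (qβ s + fβ s • aβ s) s := by
      have := (hhβs.differentiable (by simp) s).hasDerivAt; rwa [hFβ2] at this
    have da : HasDerivAt aβ (fβ s • hβ s) s := by
      have := (haβs.differentiable (by simp) s).hasDerivAt; rwa [hFβ3] at this
    have : v s (G s) = (hβ s, qβ s + fβ s • aβ s, fβ s • hβ s) := by
      simp only [hv_def, hG_def, hceq s (Set.mem_Icc_of_Ioo hs), hratio]
    rw [this]
    exact dq.prodMk (dh.prodMk da)
  have heq : F t₀ = G t₀ := by simp only [hF_def, hG_def, h1, h2, h3]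
  have := ODE_solution_unique_of_mem_Ioo (v := v) (s := fun _ => Set.univ)
    (fun s _ => (hv s).lipschitzOnWith) ht0 hF hG heq hta
  exact congrArg Prod.fst this
end
end

section
/- Let N_α, N_β be spacelike ruled surfaces with k₂^α, k₂^β nowhere zero. If under a transformation s_α(s_β) with ds_α/ds_β = k₂^β/k₂^α the central tangents coincide, a_α(s_α(s_β)) = a_β(s_β), then h_α = h_β and q_α = q_β at corresponding parameters; i.e., N_α, N_β are spacelike similar ruled surfaces. -/
noncomputable section
open Real

/-- If under the transformation with `σ' = k₂^β / k₂^α ∘ σ` the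
central tangents of two spacelike ruled surfaces coincide at corresponding
parameters, then so do the central normals and the rulings; i.e. the surfaces
are spacelike similar ruled surfaces. -/
theorem central_tangents_eq_implies_similar_spacelike
    (qα hα aα qβ hβ aβ : ℝ → V3) (k1α k2α k1β k2β : ℝ → ℝ) (σ : ℝ → ℝ)
    (hσs : ContDiff ℝ (⊤ : ℕ∞) σ)
    (hk2α : ∀ s, k2α s ≠ 0) (hk2β : ∀ s, k2β s ≠ 0)
    (haαs : ContDiff ℝ (⊤ : ℕ∞) aα) (haβs : ContDiff ℝ (⊤ : ℕ∞) aβ)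
    (hFα1 : ∀ s, deriv qα s = k1α s • hα s)
    (hFα2 : ∀ s, deriv hα s = k1α s • qα s + k2α s • aα s)
    (hFα3 : ∀ s, deriv aα s = k2α s • hα s)
    (hFβ1 : ∀ s, deriv qβ s = k1β s • hβ s)
    (hFβ2 : ∀ s, deriv hβ s = k1β s • qβ s + k2β s • aβ s)
    (hFβ3 : ∀ s, deriv aβ s = k2β s • hβ s)
    (hcα : ∀ s, lcross (hα s) (aα s) = -(qα s))
    (hcβ : ∀ s, lcross (hβ s) (aβ s) = -(qβ s))
    (hlam : ∀ t, deriv σ t = k2β t / k2α (σ t))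
    (ha : ∀ t, aα (σ t) = aβ t) :
    ∀ t, hα (σ t) = hβ t ∧ qα (σ t) = qβ t := by
  intro t
  have hda : HasDerivAt aα (deriv aα (σ t)) (σ t) :=
    (haαs.differentiable (by simp) (σ t)).hasDerivAt
  have hds : HasDerivAt σ (deriv σ t) t :=
    (hσs.differentiable (by simp) t).hasDerivAt
  have hcomp : HasDerivAt (aα ∘ σ) (deriv σ t • deriv aα (σ t)) t :=
    hda.scomp t hds
  have heqf : aα ∘ σ = aβ := funext ha
  rw [heqf] at hcomp
  have h1 : deriv aβ t = deriv σ t • deriv aα (σ t) := hcomp.deriv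
  rw [hFβ3, hFα3, hlam] at h1
  have h2 : k2β t • hβ t = k2β t • hα (σ t) := by
    rw [h1, smul_smul, div_mul_cancel₀ _ (hk2α (σ t))]
  have hh : hα (σ t) = hβ t := (smul_right_injective _ (hk2β t) h2).symm
  refine ⟨hh, ?_⟩
  have hq := hcα (σ t)
  rw [ha t, hh] at hq
  have := (hcβ t).symm.trans hq
  exact (neg_injective this).symm
end
end

section
/- Let N_α, N_β be timelike conoid ruled surfaces, i.e., with k₂ ≡ 0 and k₁ nowhere zero, with the same ε = ⟨q,q⟩. Under the total-curvature transformation φ_α = φ_β (where φ = ∫k₁ ds), if the Frenet frames agree at one corresponding point then q_α = q_β at all corresponding points; hence timelike conoids form a family of timelike similar ruled surfaces. -/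
noncomputable section
open Real

lemma scalar_ode_zero (p h : ℝ → ℝ) (ε t₀ : ℝ) (hε : ε = 1 ∨ ε = -1)
    (hp : ∀ t, HasDerivAt p (h t) t)
    (hh : ∀ t, HasDerivAt h (-ε * p t) t)
    (h0p : p t₀ = 0) (h0h : h t₀ = 0) : ∀ t, p t = 0 := by
  rcases hε with rfl | rfl
  · -- energy E = p² + h² constant
    set E : ℝ → ℝ := fun t => p t ^ 2 + h t ^ 2 with hE
    have hE' : ∀ t, HasDerivAt E 0 t := by
      intro t
      have := (((hp t).fun_pow 2).fun_add ((hh t).fun_pow 2))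
      convert this using 1
      all_goals first | rfl | (norm_num; ring) | ring
    have hconst : ∀ t, E t = E t₀ := fun t =>
      is_const_of_deriv_eq_zero (fun s => (hE' s).differentiableAt)
        (fun s => (hE' s).deriv) t t₀
    intro t
    have := hconst t
    simp [hE, h0p, h0h] at this
    nlinarith [sq_nonneg (p t), sq_nonneg (h t), this]
  · -- ε = -1 : u = e^t (p - h), v = e^{-t}(p + h) constant
    have hu' : ∀ t, HasDerivAt (fun t => exp t * (p t - h t)) 0 t := by
      intro t
      have := (Real.hasDerivAt_exp t).fun_mul ((hp t).fun_sub (hh t))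
      convert this using 1
      all_goals first | rfl | (norm_num; ring) | ring
    have hv' : ∀ t, HasDerivAt (fun t => exp (-t) * (p t + h t)) 0 t := by
      intro t
      have he : HasDerivAt (fun t : ℝ => exp (-t)) (-exp (-t)) t := by
        have := (Real.hasDerivAt_exp (-t)).comp t ((hasDerivAt_id t).fun_neg)
        convert this using 1; all_goals first | rfl | (norm_num; ring) | ring
      have := he.fun_mul ((hp t).fun_add (hh t))
      convert this using 1
      all_goals first | rfl | (norm_num; ring) | ring
    have hu : ∀ t, exp t * (p t - h t) = 0 := by
      intro t
      have := is_const_of_deriv_eq_zero (f := fun t => exp t * (p t - h t))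
        (fun s => (hu' s).differentiableAt) (fun s => (hu' s).deriv) t t₀
      simpa [h0p, h0h] using this
    have hv : ∀ t, exp (-t) * (p t + h t) = 0 := by
      intro t
      have := is_const_of_deriv_eq_zero (f := fun t => exp (-t) * (p t + h t))
        (fun s => (hv' s).differentiableAt) (fun s => (hv' s).deriv) t t₀
      simpa [h0p, h0h] using this
    intro t
    have h1 := hu t; have h2 := hv t
    have e1 : p t - h t = 0 := by
      rcases mul_eq_zero.mp h1 with h | h
      · exact absurd h (exp_ne_zero t)
      · exact h
    have e2 : p t + h t = 0 := by
      rcases mul_eq_zero.mp h2 with h | h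
      · exact absurd h (exp_ne_zero (-t))
      · exact h
    linarith


/-- Timelike conoids (`k₂ ≡ 0`, `k₁ ≠ 0`), reparametrized by
`φ = ∫ k₁ ds` so that `dq/dφ = h`, `dh/dφ = -ε q`, `da/dφ = 0`, with Frenet
frames agreeing at one corresponding point, have the same rulings at all
corresponding points: conoids form a family of similar ruled surfaces. -/
theorem conoids_are_similar_timelike
    (qα hα aα qβ hβ aβ : ℝ → V3) (ε : ℝ) (t₀ : ℝ)
    (hε : ε = 1 ∨ ε = -1)
    (hqαs : ContDiff ℝ (⊤ : ℕ∞) qα) (hhαs : ContDiff ℝ (⊤ : ℕ∞) hα)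
    (hqβs : ContDiff ℝ (⊤ : ℕ∞) qβ) (hhβs : ContDiff ℝ (⊤ : ℕ∞) hβ)
    (hFα1 : ∀ t, deriv qα t = hα t)
    (hFα2 : ∀ t, deriv hα t = (-ε) • qα t)
    (hFα3 : ∀ t, deriv aα t = 0)
    (hFβ1 : ∀ t, deriv qβ t = hβ t)
    (hFβ2 : ∀ t, deriv hβ t = (-ε) • qβ t)
    (hFβ3 : ∀ t, deriv aβ t = 0)
    (hinit : qα t₀ = qβ t₀ ∧ hα t₀ = hβ t₀ ∧ aα t₀ = aβ t₀) :
    ∀ t, qα t = qβ t := by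
  obtain ⟨h1, h2, -⟩ := hinit
  intro t
  funext i
  have hqα : ∀ s, HasDerivAt qα (hα s) s := fun s => by
    have := (hqαs.differentiable (by simp) s).hasDerivAt
    rwa [hFα1 s] at this
  have hhα : ∀ s, HasDerivAt hα ((-ε) • qα s) s := fun s => by
    have := (hhαs.differentiable (by simp) s).hasDerivAt
    rwa [hFα2 s] at this
  have hqβ : ∀ s, HasDerivAt qβ (hβ s) s := fun s => by
    have := (hqβs.differentiable (by simp) s).hasDerivAt
    rwa [hFβ1 s] at this
  have hhβ : ∀ s, HasDerivAt hβ ((-ε) • qβ s) s := fun s => by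
    have := (hhβs.differentiable (by simp) s).hasDerivAt
    rwa [hFβ2 s] at this
  have key := scalar_ode_zero (fun s => qα s i - qβ s i) (fun s => hα s i - hβ s i)
    ε t₀ hε
    (fun s => (hasDerivAt_pi.mp (hqα s) i).fun_sub (hasDerivAt_pi.mp (hqβ s) i))
    (fun s => by
      have := (hasDerivAt_pi.mp (hhα s) i).fun_sub (hasDerivAt_pi.mp (hhβ s) i)
      convert this using 1
      all_goals first | rfl | (simp [Pi.smul_apply, smul_eq_mul]; ring))
    (by simp [h1]) (by simp [h2])
  have h := key t
  try simp only [] at h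
  linarith
end
end
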